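/- arXiv:2511.00455 — 8 statements merged into one kernel-verified Lean document; each statement's English description precedes it below -/
import Mathlib

section
/- Let m ≥ 1 be an integer and α > 0 a real number, and let c_{01}, c_{02}, c_{11}, c_{12}, c_{21}, c_{22} ∈ Fin m. With n_A, n_B, n_C defined from the two unit triples (c_{0i}, c_{1i}, c_{2i}), i ∈ {1,2}, the following Gamma-function identity holds: ( m · Real.Gamma(α·m) / (Real.Gamma(α)^m · Real.Gamma(α·m + 3)) )² · ∏_{i=1}^{2} ∏_{s ∈ Fin m} Real.Gamma(α + (1 if c_{0i} = s else 0) + (1 if c_{1i} = s else 0) + (1 if c_{2i} = s else 0)) = ((α+2)(α+1))^{n_A} · (α²)^{n_B} · ((α+1)·α)^{n_C} / ((α·m+2)·(α·m+1))². -/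
/-- Indicator that the triple `(a, b, c)` has all three entries equal. -/
def isA {m : ℕ} (a b c : Fin m) : ℕ :=
  if a = b ∧ b = c then 1 else 0

/-- Indicator that the triple `(a, b, c)` has three pairwise distinct entries. -/
def isB {m : ℕ} (a b c : Fin m) : ℕ :=
  if a ≠ b ∧ b ≠ c ∧ a ≠ c then 1 else 0

/-- Indicator that the triple `(a, b, c)` has exactly two equal entries. -/
def isC {m : ℕ} (a b c : Fin m) : ℕ :=
  if (a = b ∧ b ≠ c) ∨ (b ≠ c ∧ a = c) ∨ (a ≠ b ∧ b = c) then 1 else 0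

/-- The conditional probability `q_α(c₁₁, c₁₂, c₂₁, c₂₂; c₀₁, c₀₂)` of the view
labels of two units in two views given their baseline labels (Proposition 1 of
the paper, `n = J = 2` case).  The triple of unit `i` is `(c₀ᵢ, c₁ᵢ, c₂ᵢ)`. -/
noncomputable def q (m : ℕ) (α : ℝ) (c11 c12 c21 c22 c01 c02 : Fin m) : ℝ :=
  ((α + 2) * (α + 1)) ^ (isA c01 c11 c21 + isA c02 c12 c22) *
    (α ^ 2) ^ (isB c01 c11 c21 + isB c02 c12 c22) *
    ((α + 1) * α) ^ (isC c01 c11 c21 + isC c02 c12 c22) /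
      ((α * m + 2) * (α * m + 1)) ^ 2

lemma prod_unit {m : ℕ} (α : ℝ) (hα : 0 < α) (a b c : Fin m) :
    (∏ s, Real.Gamma (α + (if a = s then (1:ℝ) else 0) +
      (if b = s then 1 else 0) + (if c = s then 1 else 0))) =
    Real.Gamma α ^ m * (α * (((α+2)*(α+1))^isA a b c * (α^2)^isB a b c *
      ((α+1)*α)^isC a b c)) := by
  have h0 : α ≠ 0 := hα.ne'
  have h1 : α + 1 ≠ 0 := by positivity
  have h2 : α + 2 ≠ 0 := by positivity
  have g1 : Real.Gamma (α+1) = α * Real.Gamma α := Real.Gamma_add_one h0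
  have g2 : Real.Gamma (α+2) = (α+1)*(α*Real.Gamma α) := by
    rw [show α+2 = (α+1)+1 by ring, Real.Gamma_add_one h1, g1]
  have g3 : Real.Gamma (α+3) = (α+2)*((α+1)*(α*Real.Gamma α)) := by
    rw [show α+3 = (α+2)+1 by ring, Real.Gamma_add_one h2, g2]
  by_cases hab : a = b <;> by_cases hbc : b = c <;> by_cases hac : a = c
  · -- all equal
    subst hab; subst hbc
    rw [show (∏ s, Real.Gamma (α + (if a = s then (1:ℝ) else 0) +
        (if a = s then 1 else 0) + (if a = s then 1 else 0))) =
        ∏ s, Real.Gamma α * (if a = s then (α+2)*((α+1)*α) else 1) from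
      Finset.prod_congr rfl fun s _ => by
        by_cases h : a = s
        · simp only [h, eq_self_iff_true, if_true, add_zero, zero_add]
          rw [show α+1+1+1 = α+3 by ring, g3]; ring
        · simp [h]]
    rw [Finset.prod_mul_distrib, Finset.prod_const, Finset.prod_ite_eq]
    have eA : isA a a a = 1 := by simp [isA]
    have eB : isB a a a = 0 := by simp [isB]
    have eC : isC a a a = 0 := by simp [isC]
    rw [eA, eB, eC]
    simp only [pow_one, pow_zero, mul_one, one_mul, Finset.mem_univ, if_true, Finset.card_univ, Fintype.card_fin]
    ring
  · exact absurd (hab.trans hbc) hac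
  · exact absurd (hab.symm.trans hac) hbc
  · -- a = b, b ≠ c
    subst hab
    rw [show (∏ s, Real.Gamma (α + (if a = s then (1:ℝ) else 0) +
        (if a = s then 1 else 0) + (if c = s then 1 else 0))) =
        ∏ s, Real.Gamma α * ((if a = s then (α+1)*α else 1) * (if c = s then α else 1)) from
      Finset.prod_congr rfl fun s _ => by
        by_cases h : a = s
        · have hc : ¬ c = s := fun hh => hbc (h.trans hh.symm)
          simp only [h, eq_self_iff_true, if_true, if_neg hc, add_zero]
          rw [show α+1+1 = α+2 by ring, g2]; ring
        · by_cases h' : c = s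
          · simp only [h', eq_self_iff_true, if_true, if_neg h, add_zero, zero_add]
            rw [g1]; ring
          · simp [h, h']]
    rw [Finset.prod_mul_distrib, Finset.prod_mul_distrib, Finset.prod_const,
      Finset.prod_ite_eq, Finset.prod_ite_eq]
    have eA : isA a a c = 0 := by simp [isA, hbc]
    have eB : isB a a c = 0 := by simp [isB]
    have eC : isC a a c = 1 := by simp [isC, hbc]
    rw [eA, eB, eC]
    simp only [pow_one, pow_zero, mul_one, one_mul, Finset.mem_univ, if_true, Finset.card_univ, Fintype.card_fin]
    ring
  · exact absurd (hac.trans hbc.symm) hab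
  · -- b = c, a ≠ b
    subst hbc
    rw [show (∏ s, Real.Gamma (α + (if a = s then (1:ℝ) else 0) +
        (if b = s then 1 else 0) + (if b = s then 1 else 0))) =
        ∏ s, Real.Gamma α * ((if b = s then (α+1)*α else 1) * (if a = s then α else 1)) from
      Finset.prod_congr rfl fun s _ => by
        by_cases h : b = s
        · have ha : ¬ a = s := fun hh => hab (hh.trans h.symm)
          simp only [h, eq_self_iff_true, if_true, if_neg ha, zero_add, add_zero]
          rw [show α+1+1 = α+2 by ring, g2]; ring
        · by_cases h' : a = s
          · simp only [h', eq_self_iff_true, if_true, if_neg h, add_zero]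
            rw [g1]; ring
          · simp [h, h']]
    rw [Finset.prod_mul_distrib, Finset.prod_mul_distrib, Finset.prod_const,
      Finset.prod_ite_eq, Finset.prod_ite_eq]
    have eA : isA a b b = 0 := by simp [isA, hab]
    have eB : isB a b b = 0 := by simp [isB]
    have eC : isC a b b = 1 := by simp [isC, hab]
    rw [eA, eB, eC]
    simp only [pow_one, pow_zero, mul_one, one_mul, Finset.mem_univ, if_true, Finset.card_univ, Fintype.card_fin]
    ring
  · -- a = c, a ≠ b
    subst hac
    rw [show (∏ s, Real.Gamma (α + (if a = s then (1:ℝ) else 0) +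
        (if b = s then 1 else 0) + (if a = s then 1 else 0))) =
        ∏ s, Real.Gamma α * ((if a = s then (α+1)*α else 1) * (if b = s then α else 1)) from
      Finset.prod_congr rfl fun s _ => by
        by_cases h : a = s
        · have hb : ¬ b = s := fun hh => hab (h.trans hh.symm)
          simp only [h, eq_self_iff_true, if_true, if_neg hb, add_zero]
          rw [show α+1+1 = α+2 by ring, g2]; ring
        · by_cases h' : b = s
          · simp only [h', eq_self_iff_true, if_true, if_neg h, add_zero, zero_add]
            rw [g1]; ring
          · simp [h, h']]
    rw [Finset.prod_mul_distrib, Finset.prod_mul_distrib, Finset.prod_const,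
      Finset.prod_ite_eq, Finset.prod_ite_eq]
    have eA : isA a b a = 0 := by simp [isA, hab]
    have eB : isB a b a = 0 := by simp [isB]
    have eC : isC a b a = 1 := by simp [isC, hab, hbc]
    rw [eA, eB, eC]
    simp only [pow_one, pow_zero, mul_one, one_mul, Finset.mem_univ, if_true, Finset.card_univ, Fintype.card_fin]
    ring
  · -- all distinct
    rw [show (∏ s, Real.Gamma (α + (if a = s then (1:ℝ) else 0) +
        (if b = s then 1 else 0) + (if c = s then 1 else 0))) =
        ∏ s, Real.Gamma α * ((if a = s then α else 1) * ((if b = s then α else 1) *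
          (if c = s then α else 1))) from
      Finset.prod_congr rfl fun s _ => by
        by_cases h : a = s
        · have hb : ¬ b = s := fun hh => hab (h.trans hh.symm)
          have hc : ¬ c = s := fun hh => hac (h.trans hh.symm)
          simp only [h, eq_self_iff_true, if_true, if_neg hb, if_neg hc, add_zero]
          rw [g1]; ring
        · by_cases h' : b = s
          · have hc : ¬ c = s := fun hh => hbc (h'.trans hh.symm)
            simp only [h', eq_self_iff_true, if_true, if_neg h, if_neg hc, add_zero, zero_add]
            rw [g1]; ring
          · by_cases h'' : c = s
            · simp only [h'', eq_self_iff_true, if_true, if_neg h, if_neg h', add_zero, zero_add]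
              rw [g1]; ring
            · simp [h, h', h'']]
    rw [Finset.prod_mul_distrib, Finset.prod_mul_distrib, Finset.prod_mul_distrib,
      Finset.prod_const, Finset.prod_ite_eq, Finset.prod_ite_eq, Finset.prod_ite_eq]
    have eA : isA a b c = 0 := by simp [isA, hab]
    have eB : isB a b c = 1 := by simp [isB, hab, hbc, hac]
    have eC : isC a b c = 0 := by simp [isC, hab, hbc, hac]
    rw [eA, eB, eC]
    simp only [pow_one, pow_zero, mul_one, one_mul, Finset.mem_univ, if_true, Finset.card_univ, Fintype.card_fin]
    ring

/-- Proposition 1 of the paper, `n = J = 2` simplification. -/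
theorem prop1_two_by_two (m : ℕ) (hm : 1 ≤ m) (α : ℝ) (hα : 0 < α)
    (c01 c02 c11 c12 c21 c22 : Fin m) :
    ((m : ℝ) * Real.Gamma (α * m) /
        (Real.Gamma α ^ m * Real.Gamma (α * m + 3))) ^ 2 *
      ((∏ s, Real.Gamma (α + (if c01 = s then 1 else 0) +
          (if c11 = s then 1 else 0) + (if c21 = s then 1 else 0))) *
        (∏ s, Real.Gamma (α + (if c02 = s then 1 else 0) +
          (if c12 = s then 1 else 0) + (if c22 = s then 1 else 0)))) =
      ((α + 2) * (α + 1)) ^ (isA c01 c11 c21 + isA c02 c12 c22) *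
        (α ^ 2) ^ (isB c01 c11 c21 + isB c02 c12 c22) *
        ((α + 1) * α) ^ (isC c01 c11 c21 + isC c02 c12 c22) /
          ((α * m + 2) * (α * m + 1)) ^ 2 := by
  have hm0 : (0:ℝ) < α * m := by
    have : (1:ℝ) ≤ m := by exact_mod_cast hm
    nlinarith
  have hx0 : α * m ≠ 0 := hm0.ne'
  have hx1 : α * m + 1 ≠ 0 := by positivity
  have hx2 : α * m + 2 ≠ 0 := by positivity
  have gm : Real.Gamma (α*m+3) =
      (α*m+2)*((α*m+1)*((α*m)*Real.Gamma (α*m))) := by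
    rw [show α*m+3 = (α*m+2)+1 by ring, Real.Gamma_add_one hx2,
      show α*m+2 = (α*m+1)+1 by ring, Real.Gamma_add_one hx1,
      show α*m+1 = (α*m)+1 by ring, Real.Gamma_add_one hx0]
  have hG : Real.Gamma α ≠ 0 := (Real.Gamma_pos_of_pos hα).ne'
  have hGm : Real.Gamma (α*m) ≠ 0 := (Real.Gamma_pos_of_pos hm0).ne'
  have hmne : (m:ℝ) ≠ 0 := by positivity
  rw [prod_unit α hα c01 c11 c21, prod_unit α hα c02 c12 c22, gm,
    pow_add, pow_add, pow_add]
  have hGp : Real.Gamma α ^ m ≠ 0 := pow_ne_zero _ hG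
  field_simp
end

section
/- Let m, n, J be integers with m ≥ 1, n ≥ 1, J ≥ 1, let α > 0 be real, and fix a baseline label vector c₀ ∈ (Fin m)ⁿ. Then summing over all J-tuples of label vectors (c₁, …, c_J) ∈ ((Fin m)ⁿ)^J gives ∑_{(c₁,…,c_J)} Z(m, α, n) · ∏_{i=1}^{n} ∏_{s ∈ Fin m} Real.Gamma(α + (1 if c_{0i} = s else 0) + ∑_{j=1}^{J} (1 if c_{ji} = s else 0)) = 1, where Z(m, α, n) = ( m · Real.Gamma(α·m) / (Real.Gamma(α)^m · Real.Gamma(α·m + J + 1)) )ⁿ. -/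
/-!
Fix a row `i`. The labels `c₁ i, …, c_J i` contribute `∏ s Γ(β s + #{j | c j i = s})` with
`β s = α + 𝟙{c₀ i = s}`, and summing this over all `J`-tuples of labels gives the
Dirichlet-multinomial normalisation `∏ s Γ(β s) · Γ(B + J) / Γ(B)` with `B = ∑ s β s = α m + 1`:
peel off the first label and use `Γ(x + 1) = x Γ(x)`. One factor of the normaliser `Z` is exactly
the reciprocal of this row sum, and the rows are independent, so the whole sum factors into `n`
copies of `1`.
-/

open Finset

variable {ι : Type*} [Fintype ι] [DecidableEq ι]

lemma prod_Gamma_add_ite_eq {β : ι → ℝ} (hβ : ∀ s, 0 < β s) (a : ι) :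
    ∏ s, Real.Gamma (β s + if a = s then 1 else 0) = β a * ∏ s, Real.Gamma (β s) := by
  have h (s : ι) : Real.Gamma (β s + if a = s then 1 else 0)
      = (if a = s then β s else 1) * Real.Gamma (β s) := by
    split_ifs with has
    · subst has; exact Real.Gamma_add_one (hβ a).ne'
    · simp
  rw [Fintype.prod_congr _ _ h, prod_mul_distrib, prod_ite_eq]
  simp

theorem sum_prod_Gamma_add_count [Nonempty ι] (J : ℕ) {β : ι → ℝ} (hβ : ∀ s, 0 < β s) :
    ∑ f : Fin J → ι, ∏ s, Real.Gamma (β s + ∑ j, if f j = s then 1 else 0)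
      = (∏ s, Real.Gamma (β s)) * Real.Gamma ((∑ s, β s) + J) / Real.Gamma (∑ s, β s) := by
  induction J generalizing β with
  | zero => simp [(Real.Gamma_pos_of_pos (sum_pos (fun s _ => hβ s) univ_nonempty)).ne']
  | succ J ih =>
    set B := ∑ s, β s
    have hB : 0 < B := sum_pos (fun s _ => hβ s) univ_nonempty
    have hfirst (a : ι) :
        ∑ f : Fin J → ι, ∏ s, Real.Gamma
            (β s + ∑ j, if (Fin.cons a f : Fin (J + 1) → ι) j = s then 1 else 0)
          = β a * ((∏ s, Real.Gamma (β s)) * Real.Gamma (B + 1 + J) / Real.Gamma (B + 1)) := by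
      have hβa (s : ι) : 0 < β s + if a = s then 1 else 0 := by
        split_ifs <;> linarith [hβ s]
      have hshift : ∑ s, (β s + if a = s then 1 else 0) = B + 1 := by
        rw [sum_add_distrib, sum_ite_eq]; simp [B]
      simp only [Fin.sum_univ_succ, Fin.cons_zero, Fin.cons_succ, ← add_assoc]
      rw [ih hβa, prod_Gamma_add_ite_eq hβ, hshift]
      ring
    calc ∑ f : Fin (J + 1) → ι, ∏ s, Real.Gamma (β s + ∑ j, if f j = s then 1 else 0)
        = ∑ a, ∑ f : Fin J → ι, ∏ s, Real.Gamma
            (β s + ∑ j, if (Fin.cons a f : Fin (J + 1) → ι) j = s then 1 else 0) := by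
          rw [← (Fin.consEquiv fun _ => ι).sum_comp, Fintype.sum_prod_type]; rfl
      _ = B * ((∏ s, Real.Gamma (β s)) * Real.Gamma (B + 1 + J) / Real.Gamma (B + 1)) := by
          rw [Fintype.sum_congr _ _ hfirst, ← sum_mul]
      _ = (∏ s, Real.Gamma (β s)) * Real.Gamma (B + ↑(J + 1)) / Real.Gamma B := by
          have hΓB := (Real.Gamma_pos_of_pos hB).ne'
          rw [Real.Gamma_add_one hB.ne', Nat.cast_succ, ← add_assoc, add_right_comm]
          field_simp

theorem mul_sum_prod_Gamma_add_ite_add_count_eq_one (J : ℕ) {α : ℝ} (hα : 0 < α) (a : ι) :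
    (Fintype.card ι : ℝ) * Real.Gamma (α * Fintype.card ι) /
        (Real.Gamma α ^ Fintype.card ι * Real.Gamma (α * Fintype.card ι + J + 1)) *
      ∑ f : Fin J → ι, ∏ s,
        Real.Gamma (α + (if a = s then 1 else 0) + ∑ j, if f j = s then 1 else 0) = 1 := by
  have : Nonempty ι := ⟨a⟩
  set k : ℝ := (Fintype.card ι : ℝ)
  have hβ (s : ι) : 0 < α + if a = s then 1 else 0 := by split_ifs <;> linarith
  have hsum : ∑ s, (α + if a = s then 1 else 0) = α * k + 1 := by
    rw [sum_add_distrib, sum_ite_eq]; simp [k, mul_comm]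
  have hk : 0 < k := by simp [k, Fintype.card_pos]
  have hαk : 0 < α * k := mul_pos hα hk
  rw [sum_prod_Gamma_add_count J hβ, prod_Gamma_add_ite_eq (fun _ => hα), hsum,
    Real.Gamma_add_one hαk.ne', prod_const, card_univ, add_right_comm _ 1]
  have hΓα := (Real.Gamma_pos_of_pos hα).ne'
  have hΓαk := (Real.Gamma_pos_of_pos hαk).ne'
  have hΓαkJ := (Real.Gamma_pos_of_pos (by positivity : 0 < α * k + J + 1)).ne'
  field_simp

theorem prop1_pmf_sums_to_one_general (m n J : ℕ)
    (α : ℝ) (hα : 0 < α) (c₀ : Fin n → Fin m) :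
    (∑ c : Fin J → Fin n → Fin m,
        ((m : ℝ) * Real.Gamma (α * m) /
            (Real.Gamma α ^ m * Real.Gamma (α * m + J + 1))) ^ n *
          ∏ i, ∏ s,
            Real.Gamma (α + (if c₀ i = s then 1 else 0) +
              ∑ j, (if c j i = s then 1 else 0))) = 1 := by
  set z : ℝ := m * Real.Gamma (α * m) / (Real.Gamma α ^ m * Real.Gamma (α * m + J + 1))
  calc _ = z ^ n * ∏ i, ∑ f : Fin J → Fin m, ∏ s,
            Real.Gamma (α + (if c₀ i = s then 1 else 0) + ∑ j, if f j = s then 1 else 0) := by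
        rw [Fintype.prod_sum, ← mul_sum]
        exact congrArg _ (Fintype.sum_equiv (Equiv.piComm _) _ _ fun _ => rfl)
    _ = ∏ i, z * ∑ f : Fin J → Fin m, ∏ s,
            Real.Gamma (α + (if c₀ i = s then 1 else 0) + ∑ j, if f j = s then 1 else 0) := by
        rw [prod_mul_distrib, prod_const, card_univ, Fintype.card_fin]
    _ = 1 := prod_eq_one fun i _ => by
        simpa using mul_sum_prod_Gamma_add_ite_add_count_eq_one J hα (c₀ i)

/-- The conditional pmf of Proposition 1 sums to 1 over all configurations of
the view-level label vectors `(c₁, …, c_J)`. -/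
theorem prop1_pmf_sums_to_one (m n J : ℕ) (hm : 1 ≤ m) (hn : 1 ≤ n) (hJ : 1 ≤ J)
    (α : ℝ) (hα : 0 < α) (c₀ : Fin n → Fin m) :
    (∑ c : Fin J → Fin n → Fin m,
        ((m : ℝ) * Real.Gamma (α * m) /
            (Real.Gamma α ^ m * Real.Gamma (α * m + J + 1))) ^ n *
          ∏ i, ∏ s,
            Real.Gamma (α + (if c₀ i = s then 1 else 0) +
              ∑ j, (if c j i = s then 1 else 0))) = 1 :=
  prop1_pmf_sums_to_one_general m n J α hα c₀
end

section
/- Let m ≥ 1 be an integer, α > 0 real, and c ∈ Fin m a common baseline label for the two units (c_{01} = c_{02} = c). Then ∑_{s ∈ Fin m} ∑_{t ∈ Fin m} q_α(s, s, t, t; c, c) = ( ((α+2)(α+1))² + 3(m-1)·((α+1)·α)² + (m-1)(m-2)·(α²)² ) / ((α·m+2)·(α·m+1))². (The left side is the conditional probability that the two units co-cluster in view 1 and co-cluster in view 2, given that they share the same baseline label.) -/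
/-!
The two units carry the same baseline label `c` and, on the diagonal, the same view labels
`s` and `t`, so `q` is the square of the weight of the single triple `(c, s, t)` divided by the
normaliser. That weight depends only on the equality pattern of the triple, and for fixed `c`
exactly one pair `(s, t)` makes the triple constant, `(m - 1)(m - 2)` pairs make it pairwise
distinct and the remaining `3(m - 1)` pairs make exactly two entries equal.
-/

section EqPattern

variable {ι R : Type*} [DecidableEq ι]

def eqPatternValue (x y z : R) (a b c : ι) : R :=
  if a = b ∧ b = c then x else if a ≠ b ∧ b ≠ c ∧ a ≠ c then y else z

lemma eqPatternValue_mul_eqPatternValue [Mul R] (x y z x' y' z' : R) (a b c : ι) :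
    eqPatternValue x y z a b c * eqPatternValue x' y' z' a b c =
      eqPatternValue (x * x') (y * y') (z * z') a b c := by
  unfold eqPatternValue
  split_ifs <;> rfl

lemma eqPatternValue_self_left [AddCommGroup R] (x y z : R) (a t : ι) :
    eqPatternValue x y z a a t = z + if t = a then x - z else 0 := by
  by_cases h : a = t <;> simp [eqPatternValue, h, eq_comm, add_sub_cancel]

lemma eqPatternValue_of_ne [AddCommGroup R] (x y z : R) {a b : ι} (hab : a ≠ b) (t : ι) :
    eqPatternValue x y z a b t =
      y + (if t = a then z - y else 0) + (if t = b then z - y else 0) := by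
  by_cases ha : t = a <;> by_cases hb : t = b <;>
    simp_all [eqPatternValue, eq_comm, add_sub_cancel]

variable [Fintype ι]

lemma sum_eqPatternValue_self_left [CommRing R] (x y z : R) (a : ι) :
    ∑ t, eqPatternValue x y z a a t = x + (Fintype.card ι - 1) * z := by
  simp only [eqPatternValue_self_left, Finset.sum_add_distrib, Finset.sum_ite_eq',
    Finset.mem_univ, if_true, Finset.sum_const, Finset.card_univ, nsmul_eq_mul]
  ring

lemma sum_eqPatternValue_of_ne [CommRing R] (x y z : R) {a b : ι} (hab : a ≠ b) :
    ∑ t, eqPatternValue x y z a b t = 2 * z + (Fintype.card ι - 2) * y := by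
  simp only [eqPatternValue_of_ne x y z hab, Finset.sum_add_distrib, Finset.sum_ite_eq',
    Finset.mem_univ, if_true, Finset.sum_const, Finset.card_univ, nsmul_eq_mul]
  ring

lemma sum_sum_eqPatternValue [CommRing R] (x y z : R) (a : ι) :
    ∑ s, ∑ t, eqPatternValue x y z a s t =
      x + 3 * (Fintype.card ι - 1) * z + (Fintype.card ι - 1) * (Fintype.card ι - 2) * y := by
  have hne : ∀ s ∈ ({a}ᶜ : Finset ι), ∑ t, eqPatternValue x y z a s t =
      2 * z + (Fintype.card ι - 2) * y := fun s hs =>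
    sum_eqPatternValue_of_ne x y z (Ne.symm (by simpa using hs))
  rw [Fintype.sum_eq_add_sum_compl a, sum_eqPatternValue_self_left, Finset.sum_congr rfl hne,
    Finset.sum_const, Finset.card_compl, Finset.card_singleton, nsmul_eq_mul,
    Nat.cast_sub (Fintype.card_pos_iff.mpr ⟨a⟩), Nat.cast_one]
  ring

end EqPattern

lemma pow_isA_mul_pow_isB_mul_pow_isC {M : Type*} [Monoid M] {m : ℕ} (x y z : M)
    (a b c : Fin m) :
    x ^ isA a b c * y ^ isB a b c * z ^ isC a b c = eqPatternValue x y z a b c := by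
  unfold isA isB isC eqPatternValue
  by_cases hab : a = b <;> by_cases hbc : b = c <;> by_cases hac : a = c <;> simp_all

lemma q_eq_eqPatternValue_mul (m : ℕ) (α : ℝ) (c11 c12 c21 c22 c01 c02 : Fin m) :
    q m α c11 c12 c21 c22 c01 c02 =
      eqPatternValue ((α + 2) * (α + 1)) (α ^ 2) ((α + 1) * α) c01 c11 c21 *
        eqPatternValue ((α + 2) * (α + 1)) (α ^ 2) ((α + 1) * α) c02 c12 c22 /
          ((α * m + 2) * (α * m + 1)) ^ 2 := by
  rw [q, ← pow_isA_mul_pow_isB_mul_pow_isC, ← pow_isA_mul_pow_isB_mul_pow_isC]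
  simp only [pow_add]
  ring

theorem cocluster_given_equal_baseline_general (m : ℕ) (α : ℝ)
    (c : Fin m) :
    (∑ s : Fin m, ∑ t : Fin m, q m α s s t t c c) =
      (((α + 2) * (α + 1)) ^ 2 + 3 * ((m : ℝ) - 1) * ((α + 1) * α) ^ 2 +
          ((m : ℝ) - 1) * ((m : ℝ) - 2) * (α ^ 2) ^ 2) /
        ((α * m + 2) * (α * m + 1)) ^ 2 := by
  simp only [q_eq_eqPatternValue_mul, eqPatternValue_mul_eqPatternValue, ← Finset.sum_div]
  rw [sum_sum_eqPatternValue, Fintype.card_fin]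
  ring

/-- Probability of co-clustering in both views given equal baseline labels. -/
theorem cocluster_given_equal_baseline (m : ℕ) (hm : 1 ≤ m) (α : ℝ) (hα : 0 < α)
    (c : Fin m) :
    (∑ s : Fin m, ∑ t : Fin m, q m α s s t t c c) =
      (((α + 2) * (α + 1)) ^ 2 + 3 * ((m : ℝ) - 1) * ((α + 1) * α) ^ 2 +
          ((m : ℝ) - 1) * ((m : ℝ) - 2) * (α ^ 2) ^ 2) /
        ((α * m + 2) * (α * m + 1)) ^ 2 :=
  cocluster_given_equal_baseline_general m α c
end

section
/- Let m ≥ 1 be an integer and c ∈ Fin m. Then the function α ↦ ∑_{s ∈ Fin m} ∑_{t ∈ Fin m} q_α(s, s, t, t; c, c) tends to 1 as α tends to 0 from the right (i.e., along the filter nhdsWithin 0 (Set.Ioi 0)). In words: given that the two units share the same baseline label, the probability that they co-cluster in both views tends to 1 as α → 0. -/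
/-- Corollary 1: given equal baseline labels, the probability of co-clustering
in both views tends to 1 as `α → 0⁺`. -/
theorem cocluster_tendsto_one_alpha_zero (m : ℕ) (hm : 1 ≤ m) (c : Fin m) :
    Filter.Tendsto (fun α : ℝ => ∑ s : Fin m, ∑ t : Fin m, q m α s s t t c c)
      (nhdsWithin 0 (Set.Ioi 0)) (nhds 1) := by
  have hq : ∀ s t : Fin m, ContinuousAt (fun α : ℝ => q m α s s t t c c) 0 := by
    intro s t
    unfold q
    apply ContinuousAt.div
    · fun_prop
    · fun_prop
    · norm_num
  have hc : Filter.Tendsto (fun α : ℝ => ∑ s : Fin m, ∑ t : Fin m, q m α s s t t c c)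
      (nhds 0) (nhds (∑ s : Fin m, ∑ t : Fin m, q m 0 s s t t c c)) :=
    tendsto_finset_sum _ fun s _ => tendsto_finset_sum _ fun t _ => hq s t
  have hval : ∀ s t : Fin m, q m 0 s s t t c c =
      if s = c then (if t = c then (1:ℝ) else 0) else 0 := by
    intro s t
    unfold q isA isB isC
    rcases eq_or_ne c s with h1 | h1 <;> rcases eq_or_ne s t with h2 | h2 <;>
      rcases eq_or_ne c t with h3 | h3 <;> simp_all [eq_comm] <;> norm_num
  have h0 : ∑ s : Fin m, ∑ t : Fin m, q m 0 s s t t c c = 1 := by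
    simp only [hval]
    simp [Finset.sum_ite_eq']
  rw [h0] at hc
  exact hc.mono_left nhdsWithin_le_nhds
end

section
/- Let m ≥ 2 be an integer and c, c' ∈ Fin m with c ≠ c'. Then the function α ↦ ∑_{s ∈ Fin m} ∑_{t ∈ Fin m} q_α(s, s, t, t; c, c') tends to 0 as α tends to 0 from the right (along nhdsWithin 0 (Set.Ioi 0)). In words: given that the two units have different baseline labels, the probability that they co-cluster in both views tends to 0 as α → 0. -/
/-- Corollary 1: given different baseline labels, the probability of
co-clustering in both views tends to 0 as `α → 0⁺`. -/
theorem cocluster_tendsto_zero_alpha_zero (m : ℕ) (hm : 2 ≤ m)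
    (c c' : Fin m) (hcc : c ≠ c') :
    Filter.Tendsto (fun α : ℝ => ∑ s : Fin m, ∑ t : Fin m, q m α s s t t c c')
      (nhdsWithin 0 (Set.Ioi 0)) (nhds 0) := by
  have hsum1 : ∀ a b d : Fin m, isA a b d + isB a b d + isC a b d = 1 := by
    intro a b d
    unfold isA isB isC
    rcases eq_or_ne a b with h1 | h1 <;> rcases eq_or_ne b d with h2 | h2 <;>
      rcases eq_or_ne a d with h3 | h3 <;> simp_all
  have hA : ∀ s t : Fin m, isA c s t + isA c' s t ≤ 1 := by
    intro s t
    unfold isA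
    split_ifs with h1 h2
    · exact absurd (h1.1.trans h2.1.symm) hcc
    all_goals omega
  have key : ∀ s t : Fin m,
      Filter.Tendsto (fun α : ℝ => q m α s s t t c c') (nhds 0) (nhds 0) := by
    intro s t
    have hbc : 1 ≤ (isB c s t + isB c' s t) + (isC c s t + isC c' s t) := by
      have h1 := hsum1 c s t
      have h2 := hsum1 c' s t
      have h3 := hA s t
      omega
    have hcont : ContinuousAt (fun α : ℝ => q m α s s t t c c') 0 := by
      unfold q
      apply ContinuousAt.div (by fun_prop) (by fun_prop)
      norm_num
    have hval : q m 0 s s t t c c' = 0 := by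
      unfold q
      rcases Nat.eq_zero_or_pos (isB c s t + isB c' s t) with hb | hb
      · have hc0 : isC c s t + isC c' s t ≠ 0 := by omega
        rw [show ((0:ℝ) + 1) * 0 = 0 by ring, zero_pow hc0]
        ring
      · rw [show ((0:ℝ)) ^ 2 = 0 by ring, zero_pow (by omega : isB c s t + isB c' s t ≠ 0)]
        ring
    simpa [hval] using hcont.tendsto
  have main : Filter.Tendsto (fun α : ℝ => ∑ s : Fin m, ∑ t : Fin m, q m α s s t t c c')
      (nhds 0) (nhds (∑ _s : Fin m, ∑ _t : Fin m, (0 : ℝ))) := by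
    apply tendsto_finset_sum
    intro s _
    apply tendsto_finset_sum
    intro t _
    exact key s t
  simpa using main.mono_left nhdsWithin_le_nhds
end

section
/- Let m ≥ 1 be an integer and c ∈ Fin m. Then the function α ↦ ∑_{(u,v,w,z) ∈ (Fin m)⁴, u ≠ v, w = z} q_α(u, v, w, z; c, c) tends to 0 as α tends to 0 from the right (along nhdsWithin 0 (Set.Ioi 0)). In words: given that the two units share the same baseline label, the probability that they fail to co-cluster in view 1 but co-cluster in view 2 tends to 0 as α → 0. -/
/-!
Each summand is a rational function of `α` whose denominator is `4` at `α = 0`. If the two units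
split in view 1 while sharing the baseline label, one of their triples `(c, c₁ᵢ, c₂ᵢ)` is not
constant, so the numerator has a factor `α` and the summand vanishes at `α = 0`; continuity gives
the limit.
-/

lemma eq_and_eq_of_isB_eq_zero_of_isC_eq_zero {m : ℕ} {a b c : Fin m} (hB : isB a b c = 0)
    (hC : isC a b c = 0) : a = b ∧ b = c := by
  simp only [isB, isC] at hB hC
  by_cases hab : a = b <;> by_cases hbc : b = c <;> by_cases hac : a = c <;> simp_all

lemma q_zero_eq_zero {m : ℕ} {c11 c12 c21 c22 c01 c02 : Fin m}
    (h : ¬((c01 = c11 ∧ c11 = c21) ∧ (c02 = c12 ∧ c12 = c22))) :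
    q m 0 c11 c12 c21 c22 c01 c02 = 0 := by
  have hpos : isB c01 c11 c21 + isB c02 c12 c22 ≠ 0 ∨ isC c01 c11 c21 + isC c02 c12 c22 ≠ 0 := by
    by_contra! h0
    exact h ⟨eq_and_eq_of_isB_eq_zero_of_isC_eq_zero (by omega) (by omega),
      eq_and_eq_of_isB_eq_zero_of_isC_eq_zero (by omega) (by omega)⟩
  rcases hpos with hB | hC
  · simp [q, zero_pow hB]
  · simp [q, zero_pow hC]

lemma continuousAt_q_zero (m : ℕ) (c11 c12 c21 c22 c01 c02 : Fin m) :
    ContinuousAt (fun α : ℝ => q m α c11 c12 c21 c22 c01 c02) 0 := by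
  unfold q
  exact ContinuousAt.div (by fun_prop) (by fun_prop) (by norm_num)

theorem split_cocluster_tendsto_zero_alpha_zero_general (m : ℕ) (c : Fin m) :
    Filter.Tendsto (fun α : ℝ =>
        ∑ p ∈ Finset.univ.filter
            (fun p : Fin m × Fin m × Fin m × Fin m =>
              p.1 ≠ p.2.1 ∧ p.2.2.1 = p.2.2.2),
          q m α p.1 p.2.1 p.2.2.1 p.2.2.2 c c)
      (nhdsWithin 0 (Set.Ioi 0)) (nhds 0) := by
  set s := Finset.univ.filter (fun p : Fin m × Fin m × Fin m × Fin m =>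
    p.1 ≠ p.2.1 ∧ p.2.2.1 = p.2.2.2)
  have hzero : ∀ p ∈ s, q m 0 p.1 p.2.1 p.2.2.1 p.2.2.2 c c = 0 := fun p hp =>
    q_zero_eq_zero fun ⟨⟨h1, _⟩, ⟨h2, _⟩⟩ => (Finset.mem_filter.mp hp).2.1 (h1.symm.trans h2)
  have hlim := tendsto_finsetSum s fun p _ =>
    (continuousAt_q_zero m p.1 p.2.1 p.2.2.1 p.2.2.2 c c).tendsto
  rw [Finset.sum_eq_zero hzero] at hlim
  exact tendsto_nhdsWithin_of_tendsto_nhds hlim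

/-- Corollary 1: given equal baseline labels, the probability of failing to
co-cluster in view 1 while co-clustering in view 2 tends to 0 as `α → 0⁺`. -/
theorem split_cocluster_tendsto_zero_alpha_zero (m : ℕ) (hm : 1 ≤ m) (c : Fin m) :
    Filter.Tendsto (fun α : ℝ =>
        ∑ p ∈ Finset.univ.filter
            (fun p : Fin m × Fin m × Fin m × Fin m =>
              p.1 ≠ p.2.1 ∧ p.2.2.1 = p.2.2.2),
          q m α p.1 p.2.1 p.2.2.1 p.2.2.2 c c)
      (nhdsWithin 0 (Set.Ioi 0)) (nhds 0) :=
  split_cocluster_tendsto_zero_alpha_zero_general m c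
end

section
/- Let m ≥ 2 be an integer and c, c' ∈ Fin m with c ≠ c'. Then the function α ↦ ∑_{(u,v,w,z) ∈ (Fin m)⁴, u ≠ v, w ≠ z} q_α(u, v, w, z; c, c') tends to 1 as α tends to 0 from the right (along nhdsWithin 0 (Set.Ioi 0)). In words: given that the two units have different baseline labels, the probability that they fail to co-cluster in both views tends to 1 as α → 0. -/
/-- Corollary 1: given different baseline labels, the probability of failing to
co-cluster in both views tends to 1 as `α → 0⁺`. -/
theorem no_cocluster_tendsto_one_alpha_zero (m : ℕ) (hm : 2 ≤ m)
    (c c' : Fin m) (hcc : c ≠ c') :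
    Filter.Tendsto (fun α : ℝ =>
        ∑ p ∈ Finset.univ.filter
            (fun p : Fin m × Fin m × Fin m × Fin m =>
              p.1 ≠ p.2.1 ∧ p.2.2.1 ≠ p.2.2.2),
          q m α p.1 p.2.1 p.2.2.1 p.2.2.2 c c')
      (nhdsWithin 0 (Set.Ioi 0)) (nhds 1) := by
  set S := Finset.univ.filter
      (fun p : Fin m × Fin m × Fin m × Fin m =>
        p.1 ≠ p.2.1 ∧ p.2.2.1 ≠ p.2.2.2) with hS
  have key : ∀ a b d : Fin m, ¬(a = b ∧ b = d) → isB a b d + isC a b d ≠ 0 := by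
    intro a b d h
    unfold isB isC
    by_cases h1 : a = b <;> by_cases h2 : b = d <;> by_cases h3 : a = d <;> simp_all
  have hsum : ∑ p ∈ S, q m 0 p.1 p.2.1 p.2.2.1 p.2.2.2 c c' = 1 := by
    rw [Finset.sum_eq_single_of_mem (c, c', c, c')]
    · unfold q isA isB isC
      simp [hcc]
    · simp [hS, hcc]
    · rintro ⟨u, v, w, z⟩ hp hpne
      have h : ¬(c = u ∧ u = w) ∨ ¬(c' = v ∧ v = z) := by
        by_contra hcon
        push_neg at hcon
        obtain ⟨⟨h1, h2⟩, h3, h4⟩ := hcon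
        exact hpne (by simp [← h1, ← h2, ← h3, ← h4])
      have htot : (isB c u w + isB c' v z) + (isC c u w + isC c' v z) ≠ 0 := by
        rcases h with h | h
        · have := key c u w h; omega
        · have := key c' v z h; omega
      have hBC : (isB c u w + isB c' v z) ≠ 0 ∨ (isC c u w + isC c' v z) ≠ 0 := by
        omega
      unfold q
      rcases hBC with h0 | h0
      · rw [show ((0:ℝ)^2) = 0 by norm_num, zero_pow h0]; ring
      · rw [show (((0:ℝ)+1)*0) = 0 by norm_num, zero_pow h0]; ring
  have hcont : ∀ p : Fin m × Fin m × Fin m × Fin m,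
      ContinuousAt (fun α : ℝ => q m α p.1 p.2.1 p.2.2.1 p.2.2.2 c c') 0 := by
    intro p
    unfold q
    apply ContinuousAt.div
    · fun_prop
    · fun_prop
    · norm_num
  have : Filter.Tendsto (fun α : ℝ =>
        ∑ p ∈ S, q m α p.1 p.2.1 p.2.2.1 p.2.2.2 c c')
      (nhds 0) (nhds 1) := by
    rw [← hsum]
    exact tendsto_finset_sum _ (fun p _ => hcont p)
  exact this.mono_left nhdsWithin_le_nhds
end

section
/- Let m ≥ 1 be an integer and let c₀₁, c₀₂ ∈ Fin m be arbitrary baseline labels. Then the function α ↦ ∑_{s ∈ Fin m} ∑_{t ∈ Fin m} q_α(s, s, t, t; c₀₁, c₀₂) tends to 1/m² as α → ∞ (along Filter.atTop). In words: whatever the baseline labels, the probability that the two units co-cluster in both views tends to 1/m² as α → ∞. -/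
open Filter Topology

lemma isA_add_isB_add_isC {m : ℕ} (a b c : Fin m) : isA a b c + isB a b c + isC a b c = 1 := by
  unfold isA isB isC
  by_cases hab : a = b <;> by_cases hbc : b = c <;> by_cases hac : a = c <;> simp_all

lemma pow_mul_pow_mul_pow_div_pow_add {K : Type*} [Semifield K] (x y z d : K) (a b c : ℕ) :
    x ^ a * y ^ b * z ^ c / d ^ (a + b + c) = (x / d) ^ a * (y / d) ^ b * (z / d) ^ c := by
  rw [div_pow, div_pow, div_pow, div_mul_div_comm, div_mul_div_comm, pow_add, pow_add]

lemma tendsto_add_div_mul_add {m : ℝ} (hm : 0 < m) (p u : ℝ) :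
    Tendsto (fun α : ℝ => (α + p) / (α * m + u)) atTop (𝓝 m⁻¹) := by
  have hinv : Tendsto (fun α : ℝ => α⁻¹) atTop (𝓝 0) := tendsto_inv_atTop_zero
  have hlim : Tendsto (fun α : ℝ => (1 + p * α⁻¹) / (m + u * α⁻¹)) atTop (𝓝 (1 / m)) := by
    have hnum := (hinv.const_mul p).const_add 1
    have hden := (hinv.const_mul u).const_add m
    simp only [mul_zero, add_zero] at hnum hden
    exact hnum.div hden hm.ne'
  rw [one_div] at hlim
  refine hlim.congr' ?_
  filter_upwards [eventually_gt_atTop 0] with α hα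
  field_simp

lemma tendsto_mul_div_mul {m : ℝ} (hm : 0 < m) (p r u v : ℝ) :
    Tendsto (fun α : ℝ => (α + p) * (α + r) / ((α * m + u) * (α * m + v))) atTop
      (𝓝 (m ^ 2)⁻¹) := by
  rw [sq, mul_inv]
  simp only [mul_div_mul_comm]
  exact (tendsto_add_div_mul_add hm p u).mul (tendsto_add_div_mul_add hm r v)

lemma tendsto_q {m : ℕ} (hm : 0 < m) (c11 c12 c21 c22 c01 c02 : Fin m) :
    Tendsto (fun α : ℝ => q m α c11 c12 c21 c22 c01 c02) atTop (𝓝 (((m : ℝ) ^ 2)⁻¹ ^ 2)) := by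
  have hexp : (isA c01 c11 c21 + isA c02 c12 c22) + (isB c01 c11 c21 + isB c02 c12 c22) +
      (isC c01 c11 c21 + isC c02 c12 c22) = 2 := by
    have := isA_add_isB_add_isC c01 c11 c21
    have := isA_add_isB_add_isC c02 c12 c22
    omega
  set a := isA c01 c11 c21 + isA c02 c12 c22
  set b := isB c01 c11 c21 + isB c02 c12 c22
  set c := isC c01 c11 c21 + isC c02 c12 c22
  have hratio := tendsto_mul_div_mul (Nat.cast_pos.mpr hm)
  have hlim := (((hratio 2 1 2 1).pow a).mul ((hratio 0 0 2 1).pow b)).mul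
    ((hratio 1 0 2 1).pow c)
  rw [← pow_add, ← pow_add, hexp] at hlim
  refine hlim.congr fun α => ?_
  simp only [add_zero]
  rw [← pow_mul_pow_mul_pow_div_pow_add, hexp, ← sq, q]

/-- Corollary 1: whatever the baseline labels, the probability of co-clustering
in both views tends to `1/m²` as `α → ∞`. -/
theorem cocluster_tendsto_alpha_infty (m : ℕ) (hm : 1 ≤ m) (c01 c02 : Fin m) :
    Filter.Tendsto (fun α : ℝ => ∑ s : Fin m, ∑ t : Fin m, q m α s s t t c01 c02)
      Filter.atTop (nhds (1 / (m : ℝ) ^ 2)) := by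
  have hsum := tendsto_finsetSum Finset.univ fun s _ =>
    tendsto_finsetSum Finset.univ fun t _ => tendsto_q hm s s t t c01 c02
  convert hsum using 2
  simp only [Finset.sum_const, Finset.card_univ, Fintype.card_fin, nsmul_eq_mul]
  have hm0 : (m : ℝ) ≠ 0 := Nat.cast_ne_zero.mpr (by omega)
  field_simp
end
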